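/- Let n, d be positive integers with d ≥ n², let f > 0, and let A_1, ..., A_n ∈ ℝ^{d×d} be symmetric matrices with ∑_{i=1}^n ‖A_i‖_F² ≤ n f². Then there exists an orthogonal matrix U ∈ ℝ^{d×d} such that, defining Ã_i ∈ ℝ^{n²×n²} to be the top-left n²×n² block of Uᵀ A_i U, for every x ∈ {−1, +1}^n one has | ‖∑_{i=1}^n x_i A_i‖_op − ‖∑_{i=1}^n x_i Ã_i‖_op | ≤ 2 f. -/

import Mathlib

open MeasureTheory ProbabilityTheory

/-- Operator norm (largest singular value) of a real matrix, as the norm of the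
induced linear map between Euclidean spaces. -/
noncomputable def opNorm {m n : Type*} [Fintype m] [Fintype n] [DecidableEq n]
    (M : Matrix m n ℝ) : ℝ :=
  ‖LinearMap.toContinuousLinearMap (Matrix.toEuclideanLin M)‖

/-- Squared Frobenius norm of a real matrix. -/
noncomputable def frobNormSq {m n : Type*} [Fintype m] [Fintype n]
    (M : Matrix m n ℝ) : ℝ := ∑ i, ∑ j, (M i j) ^ 2

/-!
Let `U` be orthogonal with `Uᵀ (∑ Aᵢᵀ Aᵢ) U = diag μ`, `μ₁ ≥ μ₂ ≥ ⋯`, and put `Bᵢ = Uᵀ Aᵢ U`, so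
that `∑ Bᵢᵀ Bᵢ = diag μ`. The trace gives `∑ μ = ∑ ‖Aᵢ‖_F² ≤ n f²`, hence `n μⱼ ≤ f²` for every
`j ≥ n²`. Let `Q` be the coordinate projection onto `{j ≥ n²}` and `P = 1 - Q`. For signs `xᵢ`
and `S = ∑ xᵢ Bᵢ`, Cauchy–Schwarz gives `‖S Q v‖² ≤ n ∑ ‖Bᵢ Q v‖² = n ⟪Q v, diag μ Q v⟫ ≤ f² ‖v‖²`,
and `S - P S P = P (S Q) + (S Q)ᵀ`, so `‖S‖` and `‖P S P‖`, the norm of the top-left block,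
differ by at most `2 f`.
-/

open Matrix
open scoped Matrix.Norms.L2Operator

namespace ContinuousLinearMap

variable {𝕜 E F : Type*} [RCLike 𝕜] [NormedAddCommGroup E] [InnerProductSpace 𝕜 E]
  [CompleteSpace E] [NormedAddCommGroup F] [InnerProductSpace 𝕜 F] [CompleteSpace F]

theorem norm_sum_smul_sq_le {ι : Type*} [Fintype ι] (T : ι → E →L[𝕜] F) {x : ι → 𝕜}
    (hx : ∀ i, ‖x i‖ ≤ 1) :
    ‖∑ i, x i • T i‖ ^ 2 ≤ Fintype.card ι * ‖∑ i, adjoint (T i) ∘L T i‖ := by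
  set K := ‖∑ i, adjoint (T i) ∘L T i‖
  have hK : 0 ≤ Fintype.card ι * K := by positivity
  have hv : ∀ v, ‖(∑ i, x i • T i) v‖ ^ 2 ≤ (Fintype.card ι * K) * ‖v‖ ^ 2 := by
    intro v
    calc ‖(∑ i, x i • T i) v‖ ^ 2 ≤ (∑ i, ‖T i v‖) ^ 2 := by
          gcongr
          rw [_root_.sum_apply]
          refine (norm_sum_le _ _).trans (Finset.sum_le_sum fun i _ => ?_)
          rw [FunLike.coe_smul, Pi.smul_apply, norm_smul]
          exact mul_le_of_le_one_left (norm_nonneg _) (hx i)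
      _ ≤ Fintype.card ι * ∑ i, ‖T i v‖ ^ 2 := sq_sum_le_card_mul_sum_sq
      _ = Fintype.card ι * RCLike.re (inner 𝕜 ((∑ i, adjoint (T i) ∘L T i) v) v) := by
          simp [apply_norm_sq_eq_inner_adjoint_left, sum_inner]
      _ ≤ Fintype.card ι * (K * ‖v‖ ^ 2) := by
          gcongr
          calc _ ≤ ‖(∑ i, adjoint (T i) ∘L T i) v‖ * ‖v‖ := re_inner_le_norm _ _
            _ ≤ K * ‖v‖ * ‖v‖ := by gcongr; exact le_opNorm _ _
            _ = K * ‖v‖ ^ 2 := by ring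
      _ = _ := by ring
  have hnorm : ‖∑ i, x i • T i‖ ≤ √(Fintype.card ι * K) := by
    refine opNorm_le_bound _ (Real.sqrt_nonneg _) fun v => ?_
    rw [← Real.sqrt_sq (norm_nonneg v), ← Real.sqrt_mul hK]
    exact Real.le_sqrt_of_sq_le (hv v)
  calc _ ≤ √(Fintype.card ι * K) ^ 2 := by gcongr
    _ = _ := Real.sq_sqrt hK

end ContinuousLinearMap

namespace Matrix

section RCLike

variable {𝕜 : Type*} [RCLike 𝕜] {ι κ : Type*} [Fintype ι] [Fintype κ] [DecidableEq κ]

theorem l2_opNorm_one_le : ‖(1 : Matrix κ κ 𝕜)‖ ≤ 1 := by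
  rw [← diagonal_one, l2_opNorm_diagonal]
  exact pi_norm_le_iff_of_nonneg zero_le_one |>.mpr fun _ => norm_one.le

theorem l2_opNorm_le_one_of_isometry {E : Matrix ι κ 𝕜} (hE : Eᴴ * E = 1) : ‖E‖ ≤ 1 := by
  have h : ‖E‖ * ‖E‖ ≤ 1 := by
    rw [← l2_opNorm_conjTranspose_mul_self, hE]
    exact l2_opNorm_one_le
  nlinarith [norm_nonneg E]

theorem l2_opNorm_mul_mul_le_of_le_one [DecidableEq ι] {A : Matrix ι κ 𝕜} {B : Matrix κ ι 𝕜}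
    (hA : ‖A‖ ≤ 1) (hB : ‖B‖ ≤ 1) (Y : Matrix κ κ 𝕜) : ‖A * Y * B‖ ≤ ‖Y‖ :=
  calc ‖A * Y * B‖ ≤ ‖A‖ * ‖Y‖ * ‖B‖ := by grw [l2_opNorm_mul, l2_opNorm_mul]
    _ ≤ 1 * ‖Y‖ * 1 := by gcongr
    _ = ‖Y‖ := by ring

theorem l2_opNorm_mul_mul_conjTranspose_of_isometry [DecidableEq ι] {E : Matrix ι κ 𝕜}
    (hE : Eᴴ * E = 1) (X : Matrix κ κ 𝕜) : ‖E * X * Eᴴ‖ = ‖X‖ := by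
  have hE₁ := l2_opNorm_le_one_of_isometry hE
  have hE₂ : ‖Eᴴ‖ ≤ 1 := (l2_opNorm_conjTranspose E).trans_le hE₁
  refine le_antisymm (l2_opNorm_mul_mul_le_of_le_one hE₁ hE₂ X) ?_
  calc ‖X‖ = ‖Eᴴ * (E * X * Eᴴ) * E‖ := by
        simp only [← Matrix.mul_assoc, hE, Matrix.one_mul]
        rw [Matrix.mul_assoc, hE, Matrix.mul_one]
    _ ≤ ‖E * X * Eᴴ‖ := l2_opNorm_mul_mul_le_of_le_one hE₂ hE₁ _

theorem abs_l2_opNorm_sub_l2_opNorm_compression_le [DecidableEq ι] {S : Matrix ι ι 𝕜}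
    (hS : S.IsHermitian) {E : Matrix ι κ 𝕜} (hE : Eᴴ * E = 1) :
    |‖S‖ - ‖Eᴴ * S * E‖| ≤ 2 * ‖S * (1 - E * Eᴴ)‖ := by
  set P := E * Eᴴ
  set Q := 1 - P
  have hP : ‖P‖ ≤ 1 := by
    simpa [P] using (l2_opNorm_mul_mul_conjTranspose_of_isometry hE 1).trans_le l2_opNorm_one_le
  have hQS : ‖Q * S‖ = ‖S * Q‖ := by
    rw [← l2_opNorm_conjTranspose (S * Q), conjTranspose_mul, hS.eq]
    simp [Q, P, conjTranspose_mul]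
  have hPSP : ‖Eᴴ * S * E‖ = ‖P * S * P‖ := by
    rw [← l2_opNorm_mul_mul_conjTranspose_of_isometry hE]
    simp only [P, Matrix.mul_assoc]
  have hsplit : S - P * S * P = P * (S * Q) + Q * S := by
    simp only [Q]
    noncomm_ring
  calc |‖S‖ - ‖Eᴴ * S * E‖| = |‖S‖ - ‖P * S * P‖| := by rw [hPSP]
    _ ≤ ‖S - P * S * P‖ := abs_norm_sub_norm_le _ _
    _ ≤ ‖P‖ * ‖S * Q‖ + ‖Q * S‖ := by
        rw [hsplit]
        grw [norm_add_le, l2_opNorm_mul]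
    _ ≤ 2 * ‖S * Q‖ := by
        rw [hQS]
        nlinarith [norm_nonneg (S * Q)]

end RCLike

variable {𝕜 : Type*} [RCLike 𝕜] {ι κ ι' : Type*} [DecidableEq ι] [Fintype ι']

theorem l2_opNorm_sum_smul_sq_le [Fintype ι] (C : ι' → Matrix ι ι 𝕜) {x : ι' → 𝕜}
    (hx : ∀ i, ‖x i‖ ≤ 1) :
    ‖∑ i, x i • C i‖ ^ 2 ≤ Fintype.card ι' * ‖∑ i, (C i)ᴴ * C i‖ := by
  have := ContinuousLinearMap.norm_sum_smul_sq_le (fun i => toEuclideanCLM (𝕜 := 𝕜) (C i)) hx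
  simp only [← ContinuousLinearMap.star_eq_adjoint, ← ContinuousLinearMap.mul_def, ← map_star,
    ← map_mul, ← map_smul, ← map_sum, star_eq_conjTranspose] at this
  exact this

theorem submatrix_eq_conjTranspose_mul_mul [Fintype ι] (S : Matrix ι ι 𝕜) (e : κ → ι) :
    S.submatrix e e =
      ((1 : Matrix ι ι 𝕜).submatrix id e)ᴴ * S * (1 : Matrix ι ι 𝕜).submatrix id e := by
  rw [conjTranspose_submatrix, conjTranspose_one, Matrix.mul_assoc]
  have h₁ := mul_submatrix_one (Equiv.refl ι) e S
  have h₂ := one_submatrix_mul e (Equiv.refl ι) (S.submatrix id e)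
  simp only [Equiv.coe_refl, Equiv.refl_symm, Function.id_comp] at h₁ h₂
  rw [h₁, h₂, submatrix_submatrix]
  rfl

theorem one_sub_submatrix_one_mul_conjTranspose [Fintype κ] {e : κ → ι}
    (he : Function.Injective e) :
    1 - (1 : Matrix ι ι 𝕜).submatrix id e * ((1 : Matrix ι ι 𝕜).submatrix id e)ᴴ =
      diagonal ((Set.range e)ᶜ.indicator 1) := by
  ext i j
  rw [sub_apply, one_apply, diagonal_apply, mul_apply]
  by_cases hi : i ∈ Set.range e
  · obtain ⟨k, rfl⟩ := hi
    rw [Finset.sum_eq_single k]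
    · by_cases hj : e k = j
      · subst hj
        simp [one_apply]
      · simp [hj, Ne.symm hj, one_apply]
    · intro l _ hl
      simp [one_apply, he.ne (Ne.symm hl)]
    · simp
  · have hi' : ∀ k, i ≠ e k := fun k hk => hi ⟨k, hk.symm⟩
    simp [one_apply, hi, hi']

variable [Fintype ι] {B : ι' → Matrix ι ι ℝ} {μ : ι → ℝ}

theorem nonneg_of_sum_conjTranspose_mul_self_eq_diagonal (hμ : ∑ i, (B i)ᴴ * B i = diagonal μ)
    (j : ι) : 0 ≤ μ j := by
  have hpsd : (diagonal μ).PosSemidef :=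
    hμ ▸ posSemidef_sum _ fun i _ => posSemidef_conjTranspose_mul_self (B i)
  exact posSemidef_diagonal_iff.mp hpsd j

theorem l2_opNorm_sum_smul_mul_diagonal_indicator_le (hμ : ∑ i, (B i)ᴴ * B i = diagonal μ)
    {s : Set ι} {c : ℝ} (hc : 0 ≤ c) (hs : ∀ j ∈ s, Fintype.card ι' * μ j ≤ c ^ 2)
    {x : ι' → ℝ} (hx : ∀ i, |x i| ≤ 1) :
    ‖(∑ i, x i • B i) * diagonal (s.indicator 1)‖ ≤ c := by
  set D := diagonal (s.indicator (1 : ι → ℝ))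
  have hBD : ∑ i, (B i * D)ᴴ * (B i * D) = diagonal (s.indicator μ) :=
    calc ∑ i, (B i * D)ᴴ * (B i * D) = Dᴴ * (∑ i, (B i)ᴴ * B i) * D := by
          simp only [conjTranspose_mul, Finset.mul_sum, Finset.sum_mul, Matrix.mul_assoc]
      _ = _ := by
          rw [hμ, diagonal_conjTranspose, diagonal_mul_diagonal, diagonal_mul_diagonal]
          congr 1
          funext j
          by_cases hj : j ∈ s <;> simp [hj]
  have hsq : ‖(∑ i, x i • B i) * D‖ ^ 2 ≤ c ^ 2 :=
    calc ‖(∑ i, x i • B i) * D‖ ^ 2 = ‖∑ i, x i • (B i * D)‖ ^ 2 := by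
          simp only [Finset.sum_mul, smul_mul_assoc]
      _ ≤ Fintype.card ι' * ‖∑ i, (B i * D)ᴴ * (B i * D)‖ :=
          l2_opNorm_sum_smul_sq_le _ fun i => (Real.norm_eq_abs _).trans_le (hx i)
      _ ≤ c ^ 2 := by
          rw [hBD, l2_opNorm_diagonal, ← Real.norm_natCast, ← norm_smul]
          refine (pi_norm_le_iff_of_nonneg (sq_nonneg c)).mpr fun j => ?_
          by_cases hj : j ∈ s
          · have := nonneg_of_sum_conjTranspose_mul_self_eq_diagonal hμ j
            simpa [hj, abs_of_nonneg this] using hs j hj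
          · simp [hj, sq_nonneg]
  exact (pow_le_pow_iff_left₀ (norm_nonneg _) hc two_ne_zero).mp hsq

theorem abs_l2_opNorm_sub_l2_opNorm_sum_smul_submatrix_le [Fintype κ] [DecidableEq κ]
    (hB : ∀ i, (B i).IsHermitian) (hμ : ∑ i, (B i)ᴴ * B i = diagonal μ) {e : κ → ι}
    (he : Function.Injective e) {c : ℝ} (hc : 0 ≤ c)
    (htail : ∀ j ∉ Set.range e, Fintype.card ι' * μ j ≤ c ^ 2) {x : ι' → ℝ}
    (hx : ∀ i, |x i| ≤ 1) :
    |‖∑ i, x i • B i‖ - ‖∑ i, x i • (B i).submatrix e e‖| ≤ 2 * c := by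
  set E := (1 : Matrix ι ι ℝ).submatrix id e
  set S := ∑ i, x i • B i
  have hE : Eᴴ * E = 1 := by
    rw [← Matrix.mul_one Eᴴ]
    exact (submatrix_eq_conjTranspose_mul_mul 1 e).symm.trans (submatrix_one e he)
  have hS : S.IsHermitian := by
    simp only [S, IsHermitian, conjTranspose_sum, conjTranspose_smul, star_trivial, (hB _).eq]
  have hsub : ∑ i, x i • (B i).submatrix e e = S.submatrix e e := by
    ext
    simp [S, Matrix.sum_apply]
  rw [hsub, submatrix_eq_conjTranspose_mul_mul]
  calc _ ≤ 2 * ‖S * (1 - E * Eᴴ)‖ := abs_l2_opNorm_sub_l2_opNorm_compression_le hS hE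
    _ ≤ 2 * c := by
        rw [one_sub_submatrix_one_mul_conjTranspose he]
        gcongr
        exact l2_opNorm_sum_smul_mul_diagonal_indicator_le hμ hc htail hx

theorem l2_opNorm_transpose_mul_mul {U : Matrix ι ι ℝ} (hU : U * Uᵀ = 1) (X : Matrix ι ι ℝ) :
    ‖Uᵀ * X * U‖ = ‖X‖ := by
  have hUT : (Uᵀ)ᴴ * Uᵀ = 1 := by
    rwa [conjTranspose_eq_transpose_of_trivial, transpose_transpose]
  simpa [conjTranspose_eq_transpose_of_trivial] using
    l2_opNorm_mul_mul_conjTranspose_of_isometry hUT X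

end Matrix

theorem Matrix.IsHermitian.exists_orthogonal_antitone_diagonalization {d : ℕ}
    {M : Matrix (Fin d) (Fin d) ℝ} (hM : M.IsHermitian) :
    ∃ (U : Matrix (Fin d) (Fin d) ℝ) (μ : Fin d → ℝ),
      Uᵀ * U = 1 ∧ Antitone μ ∧ Uᵀ * M * U = diagonal μ := by
  set V : Matrix (Fin d) (Fin d) ℝ := (hM.eigenvectorUnitary : Matrix (Fin d) (Fin d) ℝ)
  -- `eigenvalues₀` is antitone; `σ` transports it to the index type `Fin d` of `eigenvalues`
  let σ : Fin d ≃ Fin d :=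
    (finCongr (Fintype.card_fin d).symm).trans (Fintype.equivOfCardEq (Fintype.card_fin _))
  have hV : Vᵀ * V = 1 := by
    simpa [star_eq_conjTranspose, conjTranspose_eq_transpose_of_trivial] using
      Unitary.coe_star_mul_self hM.eigenvectorUnitary
  have hVMV : Vᵀ * M * V = diagonal hM.eigenvalues := by
    simpa [Unitary.conjStarAlgAut_star_apply, star_eq_conjTranspose,
      conjTranspose_eq_transpose_of_trivial] using hM.conjStarAlgAut_star_eigenvectorUnitary
  refine ⟨V.submatrix id σ, hM.eigenvalues ∘ σ, ?_, ?_, ?_⟩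
  · change (Vᵀ * V).submatrix σ σ = 1
    rw [hV, submatrix_one_equiv]
  · intro i j hij
    simpa [σ, IsHermitian.eigenvalues] using
      hM.eigenvalues₀_antitone ((Fin.cast_le_cast _).mpr hij)
  · change (Vᵀ * M * V).submatrix σ σ = _
    rw [hVMV, submatrix_diagonal_equiv]

theorem Antitone.mul_le_sq_of_sum_le {d n : ℕ} {μ : Fin d → ℝ} (hμ : Antitone μ) (hμ0 : 0 ≤ μ)
    {f : ℝ} (hsum : ∑ k, μ k ≤ n * f ^ 2) (hn : 0 < n) {j : Fin d} (hj : n ^ 2 ≤ (j : ℕ)) :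
    n * μ j ≤ f ^ 2 := by
  have hIic : ((j : ℕ) + 1) * μ j ≤ ∑ k, μ k :=
    calc ((j : ℕ) + 1) * μ j = ∑ _k ∈ Finset.Iic j, μ j := by simp
      _ ≤ ∑ k ∈ Finset.Iic j, μ k := Finset.sum_le_sum fun k hk => hμ (Finset.mem_Iic.mp hk)
      _ ≤ ∑ k, μ k := Finset.sum_le_univ_sum_of_nonneg hμ0
  have hsq : (n : ℝ) * (n * μ j) ≤ n * f ^ 2 :=
    calc (n : ℝ) * (n * μ j) = (n ^ 2 : ℕ) * μ j := by push_cast; ring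
      _ ≤ ((j : ℕ) + 1 : ℕ) * μ j := by
          gcongr
          exacts [hμ0 j, by omega]
      _ ≤ n * f ^ 2 := by
          push_cast
          exact hIic.trans hsum
  exact le_of_mul_le_mul_left hsq (by exact_mod_cast hn)

theorem trace_conjTranspose_mul_self_eq_frobNormSq {m n : Type*} [Fintype m] [Fintype n]
    (A : Matrix m n ℝ) : (Aᴴ * A).trace = frobNormSq A := by
  simp only [trace, diag, mul_apply, conjTranspose_apply, star_trivial, frobNormSq, sq]
  exact Finset.sum_comm

theorem opNorm_eq_l2_opNorm {m n : Type*} [Fintype m] [Fintype n] [DecidableEq n]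
    (M : Matrix m n ℝ) : opNorm M = ‖M‖ :=
  rfl

theorem exists_orthogonal_sum_conjTranspose_mul_self_eq_diagonal {d : ℕ} {ι : Type*} [Fintype ι]
    (A : ι → Matrix (Fin d) (Fin d) ℝ) :
    ∃ (U : Matrix (Fin d) (Fin d) ℝ) (μ : Fin d → ℝ), Uᵀ * U = 1 ∧ U * Uᵀ = 1 ∧ Antitone μ ∧
      ∑ i, (Uᵀ * A i * U)ᴴ * (Uᵀ * A i * U) = diagonal μ ∧
      ∑ j, μ j = ∑ i, frobNormSq (A i) := by
  set M := ∑ i, (A i)ᴴ * A i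
  have hM : M.IsHermitian :=
    (posSemidef_sum _ fun i _ => posSemidef_conjTranspose_mul_self (A i)).isHermitian
  obtain ⟨U, μ, hU, hμ, hUMU⟩ := hM.exists_orthogonal_antitone_diagonalization
  have hU' : U * Uᵀ = 1 := mul_eq_one_comm.mp hU
  refine ⟨U, μ, hU, hU', hμ, ?_, ?_⟩
  · rw [← hUMU]
    simp only [M, Finset.mul_sum, Finset.sum_mul]
    refine Finset.sum_congr rfl fun i _ => ?_
    simp only [conjTranspose_eq_transpose_of_trivial, transpose_mul, transpose_transpose,
      Matrix.mul_assoc]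
    rw [← Matrix.mul_assoc U, hU', Matrix.one_mul]
  · rw [← trace_diagonal, ← hUMU, trace_mul_cycle, hU', Matrix.one_mul, trace_sum]
    simp only [trace_conjTranspose_mul_self_eq_frobNormSq]

open Matrix in
/-- **Dimension reduction (proof of Theorem 1.3).** For `d ≥ n²`, `f > 0`, and symmetric
matrices `A 1, …, A n ∈ ℝ^{d×d}` with `∑ ‖A i‖_F² ≤ n f²`, there is an orthogonal matrix
`U` such that, with `Ã i` the top-left `n²×n²` block of `Uᵀ A i U`, for every sign
vector `x ∈ {±1}ⁿ` one has `|‖∑ x i • A i‖_op - ‖∑ x i • Ã i‖_op| ≤ 2 f`. -/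
theorem dimension_reduction (n d : ℕ) (hn : 0 < n) (hd : n ^ 2 ≤ d)
    (f : ℝ) (hf : 0 < f)
    (A : Fin n → Matrix (Fin d) (Fin d) ℝ) (hsymm : ∀ i, (A i).IsSymm)
    (hF : ∑ i, frobNormSq (A i) ≤ (n : ℝ) * f ^ 2) :
    ∃ U : Matrix (Fin d) (Fin d) ℝ, Uᵀ * U = 1 ∧ U * Uᵀ = 1 ∧
      ∀ x : Fin n → ℝ, (∀ i, x i = 1 ∨ x i = -1) →
        |opNorm (∑ i, x i • A i) -
          opNorm (∑ i, x i •
            ((Uᵀ * A i * U).submatrix (Fin.castLE hd) (Fin.castLE hd)))| ≤ 2 * f := by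
  obtain ⟨U, μ, hU, hU', hμ, hBμ, hμsum⟩ :=
    exists_orthogonal_sum_conjTranspose_mul_self_eq_diagonal A
  refine ⟨U, hU, hU', fun x hx => ?_⟩
  have hμ0 := nonneg_of_sum_conjTranspose_mul_self_eq_diagonal hBμ
  have htail : ∀ j ∉ Set.range (Fin.castLE hd), Fintype.card (Fin n) * μ j ≤ f ^ 2 :=
    fun j hj => by
      rw [Fintype.card_fin]
      exact hμ.mul_le_sq_of_sum_le hμ0 (hμsum ▸ hF) hn (by simpa [Fin.range_castLE] using hj)
  have hB : ∀ i, (Uᵀ * A i * U).IsHermitian := fun i => by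
    simpa [conjTranspose_eq_transpose_of_trivial] using
      isHermitian_conjTranspose_mul_mul U (isHermitian_iff_isSymm.mpr (hsymm i))
  have hconj : Uᵀ * (∑ i, x i • A i) * U = ∑ i, x i • (Uᵀ * A i * U) := by
    simp only [Finset.mul_sum, Finset.sum_mul, mul_smul_comm, smul_mul_assoc]
  rw [opNorm_eq_l2_opNorm, opNorm_eq_l2_opNorm, ← l2_opNorm_transpose_mul_mul hU', hconj]
  exact abs_l2_opNorm_sub_l2_opNorm_sum_smul_submatrix_le hB hBμ (Fin.castLE_injective hd) hf.le
    htail fun i => by rcases hx i with h | h <;> simp [h]
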